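/- Let X be a random closed subset of ℝ (a 𝒞-valued random variable with the Fell–Matheron Borel σ-algebra). Then the set of t ∈ ℝ at which P(g_{t−}(X) = g_t(X)) = 1 fails, i.e. {t : P(g_{t−}(X) ≠ g_t(X)) > 0}, is at most countable. -/

import Mathlib

open scoped Real
open MeasureTheory

/-- The space of all closed subsets of `ℝ`. -/
def ClosedSubsets : Type := {S : Set ℝ // IsClosed S}

/-- The Fell–Matheron distance on closed subsets of `ℝ`. -/
noncomputable def FMdist (C C' : ClosedSubsets) : ℝ :=
  Metric.hausdorffDist
    (Real.arctan '' C.1 ∪ {-(π / 2), π / 2})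
    (Real.arctan '' C'.1 ∪ {-(π / 2), π / 2})

/-- The Fell–Matheron topology on closed subsets of `ℝ`. -/
noncomputable def fellTop : TopologicalSpace ClosedSubsets :=
  TopologicalSpace.generateFrom
    {s : Set ClosedSubsets | ∃ C ε, 0 < ε ∧ s = {D | FMdist C D < ε}}

/-- `gSet t C = sup {x ∈ C : x ≤ t}`, with values in `ℝ̄` and `sup ∅ = −∞`. -/
noncomputable def gSet (t : ℝ) (C : Set ℝ) : EReal :=
  sSup {x : EReal | ∃ r : ℝ, r ∈ C ∧ r ≤ t ∧ x = (r : EReal)}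

/-- The left limit `g_{t−}(C) = sup_{s < t} g_s(C)`. -/
noncomputable def gSetLeft (t : ℝ) (C : Set ℝ) : EReal :=
  sSup {x : EReal | ∃ s : ℝ, s < t ∧ x = gSet s C}

/-!
If `g_{t−}(C) < g_t(C)`, then `t ∈ C` and `C` misses an interval `(u, t)` with `u` rational.
For a fixed `u`, the events "`t ∈ X` and `X` misses `(u, t)`", `t > u`, are pairwise disjoint,
so only countably many of them have positive probability; a countable union over `u` gives
the claim. These events are measurable because `{C | C ∩ K = ∅}` is Fell-open for compact `K`
and open subsets of `ℝ` are σ-compact.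
-/

open Set Function

theorem IsOpen.isSigmaCompact_of_secondCountable {X : Type*} [TopologicalSpace X]
    [LocallyCompactSpace X] [SecondCountableTopology X] {U : Set X} (hU : IsOpen U) :
    IsSigmaCompact U := by
  have := hU.locallyCompactSpace
  exact isSigmaCompact_iff_sigmaCompactSpace.mpr inferInstance

namespace ClosedSubsets

/-- `FMdist C D` is the Hausdorff distance between `C.arctanImage` and `D.arctanImage`. -/
noncomputable def arctanImage (C : ClosedSubsets) : Set ℝ :=
  Real.arctan '' C.1 ∪ {-(π / 2), π / 2}

lemma arctanImage_subset_Icc (C : ClosedSubsets) : C.arctanImage ⊆ Icc (-(π / 2)) (π / 2) := by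
  rintro x (⟨r, -, rfl⟩ | hx)
  · exact Ioo_subset_Icc_self (Real.arctan_mem_Ioo r)
  · rcases hx with rfl | rfl <;> constructor <;> linarith [Real.pi_pos]

lemma hausdorffEDist_arctanImage_ne_top (C D : ClosedSubsets) :
    Metric.hausdorffEDist C.arctanImage D.arctanImage ≠ ⊤ :=
  Metric.hausdorffEDist_ne_top_of_nonempty_of_bounded ⟨π / 2, by simp [arctanImage]⟩
    ⟨π / 2, by simp [arctanImage]⟩
    ((Metric.isBounded_Icc _ _).subset C.arctanImage_subset_Icc)
    ((Metric.isBounded_Icc _ _).subset D.arctanImage_subset_Icc)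

/-- `tan` is continuous at every `arctan x` and undoes `arctan`, so it pulls closure points
of `arctan '' C` back into the closed set `C`. -/
lemma disjoint_image_arctan_closure_arctanImage {C : ClosedSubsets} {K : Set ℝ}
    (h : Disjoint C.1 K) : Disjoint (Real.arctan '' K) (closure C.arctanImage) := by
  rw [Set.disjoint_left]
  rintro - ⟨x, hxK, rfl⟩ hzcl
  have hx := Real.arctan_mem_Ioo x
  rw [arctanImage.eq_def, closure_union, (toFinite {-(π / 2), π / 2}).isClosed.closure_eq] at hzcl
  rcases hzcl with hz | hz
  · have hcont : ContinuousAt Real.tan (Real.arctan x) :=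
      Real.continuousAt_tan.2 (Real.cos_arctan_pos x).ne'
    have hxC := mem_closure_image hcont hz
    simp only [image_image, Real.tan_arctan, image_id', C.2.closure_eq] at hxC
    exact h.notMem_of_mem_left hxC hxK
  · rcases hz with hz | hz
    exacts [hx.1.ne' hz, hx.2.ne hz]

theorem isOpen_setOf_disjoint {K : Set ℝ} (hK : IsCompact K) :
    @IsOpen ClosedSubsets fellTop {C | Disjoint C.1 K} := by
  let := fellTop
  refine isOpen_iff_forall_mem_open.2 fun C hC => ?_
  obtain ⟨δ, hδ, hthick⟩ := (hK.image Real.continuous_arctan).exists_thickening_subset_open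
    isClosed_closure.isOpen_compl (disjoint_image_arctan_closure_arctanImage hC).subset_compl_right
  refine ⟨{D | FMdist C D < δ}, fun D hD => ?_, .basic _ ⟨C, δ, hδ, rfl⟩, ?_⟩
  · rw [Set.mem_ofPred_eq, Set.disjoint_left]
    intro x hxD hxK
    obtain ⟨y, hyC, hy⟩ := Metric.exists_dist_lt_of_hausdorffDist_lt' (mem_union_left _
      (mem_image_of_mem _ hxD)) hD (hausdorffEDist_arctanImage_ne_top C D)
    exact hthick (Metric.mem_thickening_iff.2 ⟨_, mem_image_of_mem _ hxK, hy⟩)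
      (subset_closure hyC)
  · simpa [FMdist, Metric.hausdorffDist_self_zero] using hδ

theorem measurableSet_setOf_disjoint {S : Set ℝ} (hS : IsSigmaCompact S) :
    MeasurableSet[@borel ClosedSubsets fellTop] {C : ClosedSubsets | Disjoint C.1 S} := by
  obtain ⟨K, hK, rfl⟩ := hS
  simp only [disjoint_iUnion_right, ofPred_forall]
  exact .iInter fun n => MeasurableSpace.measurableSet_generateFrom (isOpen_setOf_disjoint (hK n))

theorem measurableSet_setOf_mem (t : ℝ) :
    MeasurableSet[@borel ClosedSubsets fellTop] {C : ClosedSubsets | t ∈ C.1} := by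
  simpa only [disjoint_singleton_right, compl_ofPred, not_not] using
    (measurableSet_setOf_disjoint isCompact_singleton.isSigmaCompact (S := {t})).compl

def isolatedFromLeft (u t : ℝ) : Set ClosedSubsets :=
  {C | u < t ∧ t ∈ C.1 ∧ Disjoint C.1 (Ioo u t)}

theorem measurableSet_isolatedFromLeft (u t : ℝ) :
    MeasurableSet[@borel ClosedSubsets fellTop] (isolatedFromLeft u t) :=
  (MeasurableSet.const (u < t)).inter <| (measurableSet_setOf_mem t).inter <|
    measurableSet_setOf_disjoint isOpen_Ioo.isSigmaCompact_of_secondCountable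

theorem pairwise_disjoint_isolatedFromLeft (u : ℝ) :
    Pairwise (Disjoint on isolatedFromLeft u) := by
  have key : ∀ {t t' : ℝ}, t < t' → Disjoint (isolatedFromLeft u t) (isolatedFromLeft u t') :=
    fun htt' => disjoint_left.2 fun _ ⟨hut, htC, _⟩ ⟨_, _, hC'⟩ =>
      hC'.notMem_of_mem_left htC ⟨hut, htt'⟩
  exact fun t t' hne => hne.lt_or_gt.elim key fun h => (key h).symm

end ClosedSubsets

section GSet

variable {C : Set ℝ} {s t : ℝ}

lemma coe_le_gSet_of_mem (hc : t ∈ C) : (t : EReal) ≤ gSet t C :=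
  le_sSup ⟨t, hc, le_rfl, rfl⟩

lemma gSet_mono (C : Set ℝ) : Monotone fun t => gSet t C :=
  fun _ _ hst => sSup_le_sSup fun _ ⟨r, hr, hrs, hx⟩ => ⟨r, hr, hrs.trans hst, hx⟩

lemma gSet_le_gSetLeft (hst : s < t) : gSet s C ≤ gSetLeft t C :=
  le_sSup ⟨s, hst, rfl⟩

lemma gSetLeft_le_gSet : gSetLeft t C ≤ gSet t C :=
  sSup_le fun _ ⟨_, hst, hx⟩ => hx ▸ gSet_mono C hst.le

lemma exists_mem_lt_of_lt_gSet {x : EReal} (hx : x < gSet t C) :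
    ∃ r ∈ C, r ≤ t ∧ x < r := by
  obtain ⟨_, ⟨r, hr, hrt, rfl⟩, hxr⟩ := lt_sSup_iff.1 hx
  exact ⟨r, hr, hrt, hxr⟩

theorem exists_rat_gap_of_gSetLeft_ne_gSet (h : gSetLeft t C ≠ gSet t C) :
    ∃ u : ℚ, (u : ℝ) < t ∧ t ∈ C ∧ Disjoint C (Ioo (u : ℝ) t) := by
  obtain ⟨u, hu_left, hu_g⟩ := EReal.exists_rat_btwn_of_lt (gSetLeft_le_gSet.lt_of_ne h)
  have hgap : ∀ c ∈ C, (u : ℝ) ≤ c → t ≤ c := fun c hc huc => by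
    by_contra! hct
    have := (coe_le_gSet_of_mem hc).trans_lt ((gSet_le_gSetLeft hct).trans_lt hu_left)
    exact (EReal.coe_lt_coe_iff.1 this).not_ge huc
  obtain ⟨r, hrC, hrt, hur⟩ := exists_mem_lt_of_lt_gSet hu_g
  have hur : (u : ℝ) < r := EReal.coe_lt_coe_iff.1 hur
  obtain rfl : r = t := hrt.antisymm (hgap r hrC hur.le)
  exact ⟨u, hur, hrC, disjoint_left.2 fun c hc hcI => (hgap c hc hcI.1.le).not_gt hcI.2⟩

end GSet

/-- If `X` is a random closed subset of `ℝ` (measurable for the Borel σ-algebra of the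
Fell–Matheron topology) on a probability space, then the set of `t ∈ ℝ` at which
`P(g_{t−}(X) = g_t(X)) = 1` fails is at most countable. -/
theorem countable_bad_times {Ω : Type*} [MeasurableSpace Ω] (μ : Measure Ω)
    [IsProbabilityMeasure μ] (X : Ω → ClosedSubsets)
    (hX : @Measurable Ω ClosedSubsets _ (@borel ClosedSubsets fellTop) X) :
    Set.Countable {t : ℝ | μ {ω | gSetLeft t (X ω).1 ≠ gSet t (X ω).1} ≠ 0} := by
  have hcount (u : ℝ) : {t | 0 < μ (X ⁻¹' ClosedSubsets.isolatedFromLeft u t)}.Countable :=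
    Measure.countable_meas_pos_of_disjoint_iUnion
      (fun t => hX (ClosedSubsets.measurableSet_isolatedFromLeft u t))
      fun _ _ h => (ClosedSubsets.pairwise_disjoint_isolatedFromLeft u h).preimage X
  refine (countable_iUnion fun u : ℚ => hcount u).mono fun t ht => ?_
  have hcover : {ω | gSetLeft t (X ω).1 ≠ gSet t (X ω).1} ⊆
      ⋃ u : ℚ, X ⁻¹' ClosedSubsets.isolatedFromLeft u t :=
    fun ω hω => mem_iUnion.2 (exists_rat_gap_of_gSetLeft_ne_gSet hω)
  obtain ⟨u, hu⟩ : ∃ u : ℚ, μ (X ⁻¹' ClosedSubsets.isolatedFromLeft u t) ≠ 0 := by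
    by_contra! h
    exact ht (measure_mono_null hcover (measure_iUnion_null h))
  exact mem_iUnion.2 ⟨u, pos_iff_ne_zero.2 hu⟩
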